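/- arXiv:2301.00317 — 3 statements merged into one kernel-verified Lean document; each statement's English description precedes it below -/
import Mathlib

section
/- Let G_1, G_2 be H-consistent graphs and k ≥ 2. Then TS_k(H(G_1,G_2)) equals the union TS_k(G_1) ∪ TS_k(G_2) if and only if there is no pair of size-k independent sets S_1 of G_1 and S_2 of G_2 with |S_1 ∩ V(H)| = |S_2 ∩ V(H)| = |S_1 ∩ S_2| = k−1. -/
open SimpleGraph

/-- `I` is a size-`k` independent set of the labelled graph `G` with vertex set `Vs`. -/
def IsIndepK {W : Type*} (G : SimpleGraph W) (Vs : Set W) (k : ℕ) (I : Finset W) : Prop :=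
  (I : Set W) ⊆ Vs ∧ I.card = k ∧ ∀ u ∈ I, ∀ v ∈ I, ¬ G.Adj u v

/-- Token-sliding adjacency between size-`k` independent sets of the labelled graph `G`
with vertex set `Vs`. -/
def TSAdj {W : Type*} (G : SimpleGraph W) (Vs : Set W) (k : ℕ) (I J : Finset W) : Prop :=
  IsIndepK G Vs k I ∧ IsIndepK G Vs k J ∧
    ∃ u v, (I : Set W) \ (J : Set W) = {u} ∧ (J : Set W) \ (I : Set W) = {v} ∧ G.Adj u v

/-- The `H`-join of the labelled graphs `G₁` (vertex set `V₁`) and `G₂` (vertex set `V₂`),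
where `H` is the common induced subgraph on `V₁ ∩ V₂`: all edges of `G₁` and `G₂`, plus all
edges between `V₁ \ V₂` and `V₂ \ V₁`. -/
def hJoin {W : Type*} (G₁ G₂ : SimpleGraph W) (V₁ V₂ : Set W) : SimpleGraph W :=
  SimpleGraph.fromRel fun a b =>
    G₁.Adj a b ∨ G₂.Adj a b ∨ (a ∈ V₁ \ V₂ ∧ b ∈ V₂ \ V₁)

/-- The crossing condition of Proposition 7: `S₁` is a size-`k` independent set of `G₁`,
`S₂` one of `G₂`, and `|S₁ ∩ W| = |S₂ ∩ W| = |S₁ ∩ S₂| = k - 1` where `W = V₁ ∩ V₂`. -/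
def Crossing {W : Type*} (G₁ G₂ : SimpleGraph W) (V₁ V₂ : Set W) (k : ℕ)
    (S₁ S₂ : Finset W) : Prop :=
  IsIndepK G₁ V₁ k S₁ ∧ IsIndepK G₂ V₂ k S₂ ∧
    ((S₁ : Set W) ∩ (V₁ ∩ V₂)).ncard = k - 1 ∧
    ((S₂ : Set W) ∩ (V₁ ∩ V₂)).ncard = k - 1 ∧
    ((S₁ : Set W) ∩ (S₂ : Set W)).ncard = k - 1

/-! On `V₁` the join restricts to `G₁` and on `V₂` to `G₂`, and every independent set of the join
lies in `V₁` or in `V₂`. So a token slide `I → J` of the join is a slide of `G₁` or of `G₂` unless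
`I ⊆ V₁`, `J ⊆ V₂` (or vice versa) with neither inside `V₁ ∩ V₂`; then the slid token goes from
`V₁ \ V₂` to `V₂ \ V₁` and the common `k - 1` tokens lie in `V₁ ∩ V₂`, which is exactly a crossing
pair. Conversely a crossing pair is such a slide, along a join edge between `V₁ \ V₂` and
`V₂ \ V₁`. -/

lemma Set.mem_left_of_diff_eq_singleton {α : Type*} {s t : Set α} {u : α} (h : s \ t = {u}) :
    u ∈ s :=
  (h ▸ Set.mem_singleton u : u ∈ s \ t).1

lemma Set.inter_eq_inter_of_diff_eq_singleton {α : Type*} {s t v : Set α} {u : α}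
    (h : s \ t = {u}) (ht : t ⊆ v) (hs : ¬ s ⊆ v) : s ∩ v = s ∩ t := by
  obtain ⟨y, hys, hyv⟩ := Set.not_subset.mp hs
  have hyu : y = u := h.subset ⟨hys, fun hyt => hyv (ht hyt)⟩
  refine Set.Subset.antisymm (fun x ⟨hxs, hxv⟩ => ⟨hxs, ?_⟩) (Set.inter_subset_inter_right s ht)
  by_contra hxt
  exact hyv (hyu ▸ (h.subset ⟨hxs, hxt⟩ : x = u) ▸ hxv)

lemma ncard_inter_of_diff_eq_singleton {W : Type*} {k : ℕ} {I J : Finset W} {u : W}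
    (hI : I.card = k) (h : (I : Set W) \ J = {u}) : ((I : Set W) ∩ J).ncard = k - 1 := by
  have := Set.ncard_inter_add_ncard_sdiff_eq_ncard (I : Set W) J
  rw [h, Set.ncard_singleton, Set.ncard_coe_finset, hI] at this
  omega

lemma exists_diff_eq_singleton_of_ncard_inter {W : Type*} {k : ℕ} {I J : Finset W} (hk : 1 ≤ k)
    (hI : I.card = k) (h : ((I : Set W) ∩ J).ncard = k - 1) : ∃ u, (I : Set W) \ J = {u} := by
  have := Set.ncard_inter_add_ncard_sdiff_eq_ncard (I : Set W) J
  rw [h, Set.ncard_coe_finset, hI] at this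
  exact Set.ncard_eq_one.mp (by omega)

section TokenSliding

variable {W : Type*} {G G' : SimpleGraph W} {Vs : Set W} {k : ℕ} {I J : Finset W}

lemma isIndepK_congr (h : ∀ a ∈ Vs, ∀ b ∈ Vs, G.Adj a b ↔ G'.Adj a b) :
    IsIndepK G Vs k I ↔ IsIndepK G' Vs k I :=
  and_congr_right fun hsub => and_congr_right fun _ =>
    forall₂_congr fun u hu => forall₂_congr fun v hv => (h u (hsub hu) v (hsub hv)).not

lemma isIndepK_iff_univ_and_subset :
    IsIndepK G Vs k I ↔ IsIndepK G Set.univ k I ∧ (I : Set W) ⊆ Vs := by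
  simp only [IsIndepK, Set.subset_univ, true_and]
  tauto

lemma tsAdj_congr (h : ∀ a ∈ Vs, ∀ b ∈ Vs, G.Adj a b ↔ G'.Adj a b) :
    TSAdj G Vs k I J ↔ TSAdj G' Vs k I J := by
  unfold TSAdj
  rw [isIndepK_congr h, isIndepK_congr h]
  refine and_congr_right fun hI => and_congr_right fun hJ => exists₂_congr fun u v =>
    and_congr_right fun hu => and_congr_right fun hv => h u ?_ v ?_
  · exact hI.1 (Set.mem_left_of_diff_eq_singleton hu)
  · exact hJ.1 (Set.mem_left_of_diff_eq_singleton hv)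

lemma tsAdj_iff_univ_and_subset :
    TSAdj G Vs k I J ↔ TSAdj G Set.univ k I J ∧ (I : Set W) ⊆ Vs ∧ (J : Set W) ⊆ Vs := by
  simp only [TSAdj, isIndepK_iff_univ_and_subset (Vs := Vs)]
  tauto

lemma TSAdj.symm (h : TSAdj G Vs k I J) : TSAdj G Vs k J I :=
  let ⟨hI, hJ, u, v, hIJ, hJI, hadj⟩ := h
  ⟨hJ, hI, v, u, hJI, hIJ, hadj.symm⟩

end TokenSliding

section HJoin

variable {W : Type*} {G₁ G₂ : SimpleGraph W} {V₁ V₂ : Set W} {k : ℕ} {I J : Finset W}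

lemma hJoin_comm : hJoin G₁ G₂ V₁ V₂ = hJoin G₂ G₁ V₂ V₁ := by
  ext a b
  simp only [hJoin, fromRel_adj]
  tauto

lemma hJoin_adj_of_mem_diff {a b : W} (ha : a ∈ V₁ \ V₂) (hb : b ∈ V₂ \ V₁) :
    (hJoin G₁ G₂ V₁ V₂).Adj a b :=
  (fromRel_adj _ _ _).mpr ⟨fun hab => hb.2 (hab ▸ ha.1), .inl (.inr (.inr ⟨ha, hb⟩))⟩

lemma hJoin_adj_iff_left (hE₂ : ∀ a b, G₂.Adj a b → a ∈ V₂ ∧ b ∈ V₂)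
    (hcons : ∀ a b, a ∈ V₁ ∩ V₂ → b ∈ V₁ ∩ V₂ → (G₁.Adj a b ↔ G₂.Adj a b)) :
    ∀ a ∈ V₁, ∀ b ∈ V₁, G₁.Adj a b ↔ (hJoin G₁ G₂ V₁ V₂).Adj a b := by
  intro a ha b hb
  have adj₁_of_adj₂ : ∀ {x y}, x ∈ V₁ → y ∈ V₁ → G₂.Adj x y → G₁.Adj x y := fun hx hy h =>
    (hcons _ _ ⟨hx, (hE₂ _ _ h).1⟩ ⟨hy, (hE₂ _ _ h).2⟩).mpr h
  refine ⟨fun h => (fromRel_adj _ _ _).mpr ⟨h.ne, .inl (.inl h)⟩, ?_⟩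
  rintro ⟨-, (h | h | ⟨-, -, hb'⟩) | (h | h | ⟨-, -, ha'⟩)⟩
  · exact h
  · exact adj₁_of_adj₂ ha hb h
  · exact absurd hb hb'
  · exact h.symm
  · exact (adj₁_of_adj₂ hb ha h).symm
  · exact absurd ha ha'

lemma hJoin_adj_iff_right (hE₁ : ∀ a b, G₁.Adj a b → a ∈ V₁ ∧ b ∈ V₁)
    (hcons : ∀ a b, a ∈ V₁ ∩ V₂ → b ∈ V₁ ∩ V₂ → (G₁.Adj a b ↔ G₂.Adj a b)) :
    ∀ a ∈ V₂, ∀ b ∈ V₂, G₂.Adj a b ↔ (hJoin G₁ G₂ V₁ V₂).Adj a b := by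
  rw [hJoin_comm]
  exact hJoin_adj_iff_left hE₁ fun a b ha hb => (hcons a b ⟨ha.2, ha.1⟩ ⟨hb.2, hb.1⟩).symm

lemma isIndepK_iff_hJoin_left (hE₂ : ∀ a b, G₂.Adj a b → a ∈ V₂ ∧ b ∈ V₂)
    (hcons : ∀ a b, a ∈ V₁ ∩ V₂ → b ∈ V₁ ∩ V₂ → (G₁.Adj a b ↔ G₂.Adj a b)) :
    IsIndepK G₁ V₁ k I ↔ IsIndepK (hJoin G₁ G₂ V₁ V₂) Set.univ k I ∧ (I : Set W) ⊆ V₁ :=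
  (isIndepK_congr (hJoin_adj_iff_left hE₂ hcons)).trans isIndepK_iff_univ_and_subset

lemma isIndepK_iff_hJoin_right (hE₁ : ∀ a b, G₁.Adj a b → a ∈ V₁ ∧ b ∈ V₁)
    (hcons : ∀ a b, a ∈ V₁ ∩ V₂ → b ∈ V₁ ∩ V₂ → (G₁.Adj a b ↔ G₂.Adj a b)) :
    IsIndepK G₂ V₂ k I ↔ IsIndepK (hJoin G₁ G₂ V₁ V₂) Set.univ k I ∧ (I : Set W) ⊆ V₂ :=
  (isIndepK_congr (hJoin_adj_iff_right hE₁ hcons)).trans isIndepK_iff_univ_and_subset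

lemma tsAdj_iff_hJoin_left (hE₂ : ∀ a b, G₂.Adj a b → a ∈ V₂ ∧ b ∈ V₂)
    (hcons : ∀ a b, a ∈ V₁ ∩ V₂ → b ∈ V₁ ∩ V₂ → (G₁.Adj a b ↔ G₂.Adj a b)) :
    TSAdj G₁ V₁ k I J ↔
      TSAdj (hJoin G₁ G₂ V₁ V₂) Set.univ k I J ∧ (I : Set W) ⊆ V₁ ∧ (J : Set W) ⊆ V₁ :=
  (tsAdj_congr (hJoin_adj_iff_left hE₂ hcons)).trans tsAdj_iff_univ_and_subset

lemma tsAdj_iff_hJoin_right (hE₁ : ∀ a b, G₁.Adj a b → a ∈ V₁ ∧ b ∈ V₁)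
    (hcons : ∀ a b, a ∈ V₁ ∩ V₂ → b ∈ V₁ ∩ V₂ → (G₁.Adj a b ↔ G₂.Adj a b)) :
    TSAdj G₂ V₂ k I J ↔
      TSAdj (hJoin G₁ G₂ V₁ V₂) Set.univ k I J ∧ (I : Set W) ⊆ V₂ ∧ (J : Set W) ⊆ V₂ :=
  (tsAdj_congr (hJoin_adj_iff_right hE₁ hcons)).trans tsAdj_iff_univ_and_subset

lemma subset_or_subset_of_isIndepK_hJoin (hcover : V₁ ∪ V₂ = Set.univ) {Vs : Set W}
    (hI : IsIndepK (hJoin G₁ G₂ V₁ V₂) Vs k I) : (I : Set W) ⊆ V₁ ∨ (I : Set W) ⊆ V₂ := by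
  by_contra! h
  obtain ⟨a, ha, ha₁⟩ := Set.not_subset.mp h.1
  obtain ⟨b, hb, hb₂⟩ := Set.not_subset.mp h.2
  have ha₂ : a ∈ V₂ := (hcover ▸ Set.mem_univ a : a ∈ V₁ ∪ V₂).resolve_left ha₁
  have hb₁ : b ∈ V₁ := (hcover ▸ Set.mem_univ b : b ∈ V₁ ∪ V₂).resolve_right hb₂
  exact hI.2.2 b hb a ha (hJoin_adj_of_mem_diff ⟨hb₁, hb₂⟩ ⟨ha₂, ha₁⟩)

variable (hE₁ : ∀ a b, G₁.Adj a b → a ∈ V₁ ∧ b ∈ V₁)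
  (hE₂ : ∀ a b, G₂.Adj a b → a ∈ V₂ ∧ b ∈ V₂)
  (hcons : ∀ a b, a ∈ V₁ ∩ V₂ → b ∈ V₁ ∩ V₂ → (G₁.Adj a b ↔ G₂.Adj a b))
include hE₁ hE₂ hcons

lemma Crossing.tsAdj_hJoin (hk : 1 ≤ k) {S₁ S₂ : Finset W}
    (h : Crossing G₁ G₂ V₁ V₂ k S₁ S₂) :
    TSAdj (hJoin G₁ G₂ V₁ V₂) Set.univ k S₁ S₂ ∧
      ¬ (S₁ : Set W) ⊆ V₂ ∧ ¬ (S₂ : Set W) ⊆ V₁ := by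
  obtain ⟨h₁, h₂, hc₁, hc₂, hc₁₂⟩ := h
  -- `S₁ ∩ S₂` lies in, and has as many elements as, `S₁ ∩ (V₁ ∩ V₂)` and `S₂ ∩ (V₁ ∩ V₂)`
  have hcommon₁ : (S₁ : Set W) ∩ (S₂ : Set W) = ↑S₁ ∩ (V₁ ∩ V₂) :=
    Set.eq_of_subset_of_ncard_le (fun _ hx => ⟨hx.1, h₁.1 hx.1, h₂.1 hx.2⟩)
      (hc₁.trans hc₁₂.symm).le
  have hcommon₂ : (S₂ : Set W) ∩ (S₁ : Set W) = ↑S₂ ∩ (V₁ ∩ V₂) :=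
    Set.eq_of_subset_of_ncard_le (fun _ hx => ⟨hx.1, h₁.1 hx.2, h₂.1 hx.1⟩)
      (hc₂.trans (Set.inter_comm (S₁ : Set W) S₂ ▸ hc₁₂).symm).le
  obtain ⟨u, hu⟩ := exists_diff_eq_singleton_of_ncard_inter hk h₁.2.1 hc₁₂
  obtain ⟨v, hv⟩ := exists_diff_eq_singleton_of_ncard_inter (J := S₁) hk h₂.2.1
    (Set.inter_comm (S₁ : Set W) S₂ ▸ hc₁₂)
  have huS : u ∈ (S₁ : Set W) \ S₂ := hu ▸ Set.mem_singleton u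
  have hvS : v ∈ (S₂ : Set W) \ S₁ := hv ▸ Set.mem_singleton v
  have hu₂ : u ∉ V₂ := fun hu₂ => huS.2 (hcommon₁.superset ⟨huS.1, h₁.1 huS.1, hu₂⟩).2
  have hv₁ : v ∉ V₁ := fun hv₁ => hvS.2 (hcommon₂.superset ⟨hvS.1, hv₁, h₂.1 hvS.1⟩).2
  refine ⟨⟨?_, ?_, u, v, hu, hv, hJoin_adj_of_mem_diff ⟨h₁.1 huS.1, hu₂⟩ ⟨h₂.1 hvS.1, hv₁⟩⟩,
    fun hS => hu₂ (hS huS.1), fun hS => hv₁ (hS hvS.1)⟩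
  · exact ((isIndepK_iff_hJoin_left hE₂ hcons).mp h₁).1
  · exact ((isIndepK_iff_hJoin_right hE₁ hcons).mp h₂).1

lemma crossing_of_tsAdj_hJoin (h : TSAdj (hJoin G₁ G₂ V₁ V₂) Set.univ k I J)
    (hI₁ : (I : Set W) ⊆ V₁) (hJ₂ : (J : Set W) ⊆ V₂)
    (hI₂ : ¬ (I : Set W) ⊆ V₂) (hJ₁ : ¬ (J : Set W) ⊆ V₁) :
    Crossing G₁ G₂ V₁ V₂ k I J := by
  obtain ⟨hI, hJ, u, v, hIJ, hJI, -⟩ := h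
  have hcard : ((I : Set W) ∩ J).ncard = k - 1 := ncard_inter_of_diff_eq_singleton hI.2.1 hIJ
  refine ⟨(isIndepK_iff_hJoin_left hE₂ hcons).mpr ⟨hI, hI₁⟩,
    (isIndepK_iff_hJoin_right hE₁ hcons).mpr ⟨hJ, hJ₂⟩, ?_, ?_, hcard⟩
  · rw [← Set.inter_assoc, Set.inter_eq_left.mpr hI₁,
      Set.inter_eq_inter_of_diff_eq_singleton hIJ hJ₂ hI₂, hcard]
  · rw [Set.inter_comm V₁, ← Set.inter_assoc, Set.inter_eq_left.mpr hJ₂,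
      Set.inter_eq_inter_of_diff_eq_singleton hJI hI₁ hJ₁, Set.inter_comm, hcard]

lemma subset_same_side_of_tsAdj_hJoin (hcover : V₁ ∪ V₂ = Set.univ)
    (hnc : ¬ ∃ S₁ S₂ : Finset W, Crossing G₁ G₂ V₁ V₂ k S₁ S₂)
    (h : TSAdj (hJoin G₁ G₂ V₁ V₂) Set.univ k I J) :
    ((I : Set W) ⊆ V₁ ∧ (J : Set W) ⊆ V₁) ∨ ((I : Set W) ⊆ V₂ ∧ (J : Set W) ⊆ V₂) := by
  rcases subset_or_subset_of_isIndepK_hJoin hcover h.1 with hI₁ | hI₂ <;>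
    rcases subset_or_subset_of_isIndepK_hJoin hcover h.2.1 with hJ₁ | hJ₂
  · exact .inl ⟨hI₁, hJ₁⟩
  · by_cases hI₂ : (I : Set W) ⊆ V₂
    · exact .inr ⟨hI₂, hJ₂⟩
    by_cases hJ₁ : (J : Set W) ⊆ V₁
    · exact .inl ⟨hI₁, hJ₁⟩
    exact absurd ⟨I, J, crossing_of_tsAdj_hJoin hE₁ hE₂ hcons h hI₁ hJ₂ hI₂ hJ₁⟩ hnc
  · by_cases hJ₂ : (J : Set W) ⊆ V₂
    · exact .inr ⟨hI₂, hJ₂⟩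
    by_cases hI₁ : (I : Set W) ⊆ V₁
    · exact .inl ⟨hI₁, hJ₁⟩
    exact absurd ⟨J, I, crossing_of_tsAdj_hJoin hE₁ hE₂ hcons h.symm hJ₁ hI₂ hJ₂ hI₁⟩ hnc
  · exact .inr ⟨hI₂, hJ₂⟩

end HJoin

theorem stmt12 {W : Type*} (G₁ G₂ : SimpleGraph W) (V₁ V₂ : Set W) (k : ℕ) (hk : 2 ≤ k)
    (hE₁ : ∀ a b, G₁.Adj a b → a ∈ V₁ ∧ b ∈ V₁)
    (hE₂ : ∀ a b, G₂.Adj a b → a ∈ V₂ ∧ b ∈ V₂)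
    (hcover : V₁ ∪ V₂ = Set.univ)
    (hcons : ∀ a b, a ∈ V₁ ∩ V₂ → b ∈ V₁ ∩ V₂ → (G₁.Adj a b ↔ G₂.Adj a b)) :
    (∀ I J : Finset W, TSAdj (hJoin G₁ G₂ V₁ V₂) Set.univ k I J ↔
        (TSAdj G₁ V₁ k I J ∨ TSAdj G₂ V₂ k I J)) ↔
      ¬ ∃ S₁ S₂ : Finset W, Crossing G₁ G₂ V₁ V₂ k S₁ S₂ := by
  have hsides : ∀ I J : Finset W, TSAdj G₁ V₁ k I J ∨ TSAdj G₂ V₂ k I J ↔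
      TSAdj (hJoin G₁ G₂ V₁ V₂) Set.univ k I J ∧
        (((I : Set W) ⊆ V₁ ∧ (J : Set W) ⊆ V₁) ∨ ((I : Set W) ⊆ V₂ ∧ (J : Set W) ⊆ V₂)) := by
    intro I J
    rw [tsAdj_iff_hJoin_left hE₂ hcons, tsAdj_iff_hJoin_right hE₁ hcons]
    tauto
  simp only [hsides]
  constructor
  · rintro h ⟨S₁, S₂, hc⟩
    obtain ⟨hadj, hS₁, hS₂⟩ := hc.tsAdj_hJoin hE₁ hE₂ hcons (by omega)
    rcases ((h S₁ S₂).mp hadj).2 with ⟨-, hS₂₁⟩ | ⟨hS₁₂, -⟩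
    exacts [hS₂ hS₂₁, hS₁ hS₁₂]
  · exact fun hnc I J =>
      ⟨fun h => ⟨h, subset_same_side_of_tsAdj_hJoin hE₁ hE₂ hcons hcover hnc h⟩, And.left⟩
end

section
/- For every k ≥ 2 and every k-ary tree T (a rooted tree in which every node has at most k children), there exists a graph G such that TS_{k+1}(G) is isomorphic to T. -/
open SimpleGraph

/-- `I` is a size-`k` independent set of `G`: a vertex of the token sliding graph. -/
def TSVert {W : Type*} (G : SimpleGraph W) (k : ℕ) (I : Finset W) : Prop :=
  I.card = k ∧ ∀ u ∈ I, ∀ v ∈ I, ¬ G.Adj u v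

/-- The token sliding graph `TS_k(G)`: vertices are size-`k` independent sets of `G`,
two sets adjacent iff they differ by sliding one token along an edge of `G`. -/
def TS {W : Type*} (G : SimpleGraph W) (k : ℕ) :
    SimpleGraph {I : Finset W // TSVert G k I} :=
  SimpleGraph.fromRel fun I J =>
    ∃ u v, ((I : Finset W) : Set W) \ ((J : Finset W) : Set W) = {u} ∧
      ((J : Finset W) : Set W) \ ((I : Finset W) : Set W) = {v} ∧ G.Adj u v

/-- `2K₂`: two disjoint edges, `0-1` and `2-3`. -/
def twoK2 : SimpleGraph (Fin 4) :=
  SimpleGraph.fromRel fun a b => (a = 0 ∧ b = 1) ∨ (a = 2 ∧ b = 3)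

/-- Disjoint union of two simple graphs. -/
def disjUnion' {α β : Type*} (G : SimpleGraph α) (H : SimpleGraph β) :
    SimpleGraph (α ⊕ β) :=
  SimpleGraph.fromRel fun a b =>
    (∃ x y, a = Sum.inl x ∧ b = Sum.inl y ∧ G.Adj x y) ∨
    (∃ x y, a = Sum.inr x ∧ b = Sum.inr y ∧ H.Adj x y)

/-- `nK₁`: `n` isolated vertices. -/
def nK1 (n : ℕ) : SimpleGraph (Fin n) := ⊥

/-- `D r n s`: the tree obtained from the path on `n` vertices by appending `r` leaves
at one endpoint and `s` leaves at the other endpoint. -/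
def D (r n s : ℕ) : SimpleGraph (Fin r ⊕ Fin n ⊕ Fin s) :=
  SimpleGraph.fromRel fun a b =>
    (∃ i j : Fin n, a = Sum.inr (Sum.inl i) ∧ b = Sum.inr (Sum.inl j) ∧ (j : ℕ) = (i : ℕ) + 1) ∨
    (∃ (u : Fin r) (i : Fin n), a = Sum.inl u ∧ b = Sum.inr (Sum.inl i) ∧ (i : ℕ) = 0) ∨
    (∃ (v : Fin s) (i : Fin n), a = Sum.inr (Sum.inr v) ∧ b = Sum.inr (Sum.inl i) ∧ (i : ℕ) = n - 1)

/-- The star `K_{1,s}`: center `0` with `s` leaves. -/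
def star' (s : ℕ) : SimpleGraph (Fin (s + 1)) :=
  SimpleGraph.fromRel fun a _ => a = 0

/-- `G` contains a cycle of length `n`. -/
def HasCycleLen {α : Type*} (G : SimpleGraph α) (n : ℕ) : Prop :=
  ∃ (v : α) (w : G.Walk v v), w.IsCycle ∧ w.length = n

/-- `G` contains a cycle. -/
def HasCycle {α : Type*} (G : SimpleGraph α) : Prop :=
  ∃ (v : α) (w : G.Walk v v), w.IsCycle

/-!
Root the tree `T` at a leaf. Every vertex then has at most `k` children, so the vertices can be
coloured with `k + 1` colours such that each vertex differs from its parent and siblings differ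
from each other. For a vertex `v` and a colour `i` record the nearest ancestor of `v` of colour
`i`, or a placeholder `i` if there is none: this gives a `(k + 1)`-set `tokens v` in
`V ⊕ Fin (k + 1)`. Let `G` join two elements of this ground set iff no `tokens z` contains both.
Each `tokens v` is independent in `G`; conversely an independent `(k + 1)`-set has one element of
each colour, and it is `tokens v` for its deepest vertex `v`, because the ancestors of a vertex
form a chain. Passing from `v` to its parent swaps the single token `v` for the nearest proper
ancestor of colour `col v`, and two token sets differing by one swap only arise this way.
-/

open Finset

theorem TS_adj_iff {W : Type*} [DecidableEq W] {G : SimpleGraph W} {n : ℕ}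
    {I J : {I : Finset W // TSVert G n I}} :
    (TS G n).Adj I J ↔ I ≠ J ∧ ∃ u v, I.1 \ J.1 = {u} ∧ J.1 \ I.1 = {v} ∧ G.Adj u v := by
  simp only [TS, fromRel_adj, ← coe_sdiff, ← coe_singleton, coe_inj]
  exact and_congr_right fun _ => or_iff_left_of_imp fun ⟨u, v, hJI, hIJ, huv⟩ =>
    ⟨v, u, hIJ, hJI, huv.symm⟩

theorem nonempty_TS_iso_of_iso {α β : Type*} {G : SimpleGraph α} {H : SimpleGraph β}
    (φ : G ≃g H) (n : ℕ) : Nonempty (TS G n ≃g TS H n) := by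
  classical
  have vert_iff (I : Finset α) : TSVert G n I ↔ TSVert H n (φ.toEquiv.finsetCongr I) := by
    simp only [TSVert, Equiv.finsetCongr_apply, card_map, forall_mem_map, Equiv.coe_toEmbedding,
      RelIso.coe_fn_toEquiv, φ.map_adj_iff]
  have map_eq_singleton (s : Finset α) (x : α) :
      s.map φ.toEquiv.toEmbedding = {φ x} ↔ s = {x} := by
    rw [← map_inj (f := φ.toEquiv.toEmbedding), map_singleton]
    rfl
  refine ⟨⟨φ.toEquiv.finsetCongr.subtypeEquiv vert_iff, ?_⟩⟩
  rintro ⟨I, hI⟩ ⟨J, hJ⟩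
  simp only [Equiv.subtypeEquiv_apply, Equiv.finsetCongr_apply, TS_adj_iff, ne_eq,
    Subtype.mk.injEq, map_inj, ← Finset.map_sdiff]
  refine and_congr_right fun _ => φ.toEquiv.surjective.exists₂.trans ?_
  simp only [RelIso.coe_fn_toEquiv, map_eq_singleton, φ.map_adj_iff]

section SeparationGraph

variable {V X : Type*}

def separationGraph (S : V → Finset X) : SimpleGraph X where
  Adj a b := a ≠ b ∧ ∀ z, a ∈ S z → b ∉ S z
  symm := ⟨fun _ _ h => ⟨h.1.symm, fun z hb ha => h.2 z ha hb⟩⟩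
  loopless := ⟨fun _ h => h.1 rfl⟩

theorem nonempty_TS_separationGraph_iso [DecidableEq X] (T : SimpleGraph V) (S : V → Finset X)
    (n : ℕ)     (card_S : ∀ v, #(S v) = n) (S_injective : Function.Injective S)
    (exists_S_eq : ∀ I : Finset X, #I = n →
      (∀ a ∈ I, ∀ b ∈ I, a ≠ b → ∃ z, a ∈ S z ∧ b ∈ S z) → ∃ v, S v = I)
    (adj_iff : ∀ v w, T.Adj v w ↔
      ∃ a b, S v \ S w = {a} ∧ S w \ S v = {b} ∧ (separationGraph S).Adj a b) :
    Nonempty (TS (separationGraph S) n ≃g T) := by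
  have S_mem (v : V) : TSVert (separationGraph S) n (S v) :=
    ⟨card_S v, fun a ha b hb hab => hab.2 v ha hb⟩
  have bij : Function.Bijective
      fun v => (⟨S v, S_mem v⟩ : {I // TSVert (separationGraph S) n I}) := by
    refine ⟨fun v w h => S_injective (congrArg Subtype.val h), fun ⟨I, hcard, hind⟩ => ?_⟩
    obtain ⟨v, rfl⟩ := exists_S_eq I hcard fun a ha b hb hab => by
      by_contra! h
      exact hind a ha b hb ⟨hab, h⟩
    exact ⟨v, rfl⟩
  refine ⟨(RelIso.mk (Equiv.ofBijective _ bij) ?_).symm⟩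
  intro v w
  simp only [Equiv.ofBijective_apply, TS_adj_iff, ne_eq, Subtype.mk.injEq, adj_iff]
  exact and_iff_right_of_imp fun ⟨_, _, hab, _⟩ hvw => by simp [hvw] at hab

end SeparationGraph

/-- A rooted tree given by its parent map; `depth` certifies that iterating `parent` reaches
`root`. The value `parent root` is arbitrary. -/
structure ParentMap (V : Type*) where
  root : V
  parent : V → V
  depth : V → ℕ
  depth_eq_zero : ∀ {v}, depth v = 0 ↔ v = root
  depth_parent : ∀ {v}, v ≠ root → depth v = depth (parent v) + 1

namespace ParentMap

variable {V : Type*} (P : ParentMap V)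

@[elab_as_elim]
theorem induction {motive : V → Prop} (root : motive P.root)
    (parent : ∀ v, v ≠ P.root → motive (P.parent v) → motive v) (v : V) : motive v := by
  induction h : P.depth v generalizing v with
  | zero => exact P.depth_eq_zero.1 h ▸ root
  | succ n ih =>
    have hv : v ≠ P.root := fun hv => by simp [P.depth_eq_zero.2 hv] at h
    exact parent v hv (ih _ (by have := P.depth_parent hv; omega))

theorem depth_root : P.depth P.root = 0 := P.depth_eq_zero.2 rfl

theorem parent_ne {v : V} (hv : v ≠ P.root) : P.parent v ≠ v := fun h => by
  have := P.depth_parent hv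
  rw [h] at this
  omega

section Fold

variable [DecidableEq V]

def fold {β : Type*} (b : β) (f : V → β → β) (v : V) : β :=
  f v (if v = P.root then b else fold b f (P.parent v))
termination_by P.depth v
decreasing_by have := P.depth_parent ‹_›; omega

theorem fold_eq {β : Type*} (b : β) (f : V → β → β) (v : V) :
    P.fold b f v = f v (if v = P.root then b else P.fold b f (P.parent v)) := by
  rw [fold]

theorem fold_of_ne_root {β : Type*} (b : β) (f : V → β → β) {v : V} (hv : v ≠ P.root) :
    P.fold b f v = f v (P.fold b f (P.parent v)) := by
  rw [fold_eq, if_neg hv]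

end Fold

def graph : SimpleGraph V :=
  SimpleGraph.fromRel fun v w => v ≠ P.root ∧ P.parent v = w

theorem graph_adj {v w : V} :
    P.graph.Adj v w ↔ (v ≠ P.root ∧ P.parent v = w) ∨ (w ≠ P.root ∧ P.parent w = v) := by
  refine ⟨fun h => h.2, fun h => ⟨?_, h⟩⟩
  rintro rfl
  obtain ⟨hv, h⟩ | ⟨hv, h⟩ := h <;> exact P.parent_ne hv h

structure IsSiblingColoring {C : Type*} (col : V → C) : Prop where
  ne_parent : ∀ {v}, v ≠ P.root → col v ≠ col (P.parent v)
  injOn_siblings : ∀ {u v}, u ≠ P.root → v ≠ P.root → P.parent u = P.parent v → col u = col v →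
    u = v

section Children

variable [Fintype V] [DecidableEq V]

def children (p : V) : Finset V := {v | v ≠ P.root ∧ P.parent v = p}

theorem card_children_le [DecidableRel P.graph.Adj] {k : ℕ} (hk : 1 ≤ k)
    (hroot : P.graph.degree P.root ≤ 1) (hdeg : ∀ v, P.graph.degree v ≤ k + 1) (p : V) :
    #(P.children p) ≤ k := by
  have child_adj {v : V} (hv : v ∈ P.children p) : v ∈ P.graph.neighborFinset p := by
    simp only [children, mem_filter, mem_univ, true_and] at hv
    simpa [P.graph_adj] using Or.inr hv
  by_cases hp : p = P.root
  · subst hp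
    exact (card_le_card fun v => child_adj).trans (hroot.trans hk)
  · have hpar : P.parent p ∈ P.graph.neighborFinset p := by simp [P.graph_adj, hp]
    calc #(P.children p) ≤ #((P.graph.neighborFinset p).erase (P.parent p)) := by
          refine card_le_card fun v hv => mem_erase.2 ⟨?_, child_adj hv⟩
          rintro rfl
          simp only [children, mem_filter, mem_univ, true_and] at hv
          have h₁ := P.depth_parent hp
          have h₂ := P.depth_parent hv.1
          rw [hv.2] at h₂
          omega
      _ = P.graph.degree p - 1 := by rw [card_erase_of_mem hpar, card_neighborFinset_eq_degree]
      _ ≤ k := by have := hdeg p; omega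

theorem exists_isSiblingColoring {k : ℕ} (hk : ∀ p, #(P.children p) ≤ k) :
    ∃ col : V → Fin (k + 1), P.IsSiblingColoring col := by
  let index (v : V) : ℕ := (P.children (P.parent v)).toList.idxOf v
  have mem_children {v : V} (hv : v ≠ P.root) : v ∈ (P.children (P.parent v)).toList := by
    simp [children, hv]
  have index_lt {v : V} (hv : v ≠ P.root) : index v < k :=
    (List.idxOf_lt_length_iff.2 (mem_children hv)).trans_le
      ((length_toList _).trans_le (hk _))
  -- a nonzero shift separates `v` from its parent; shifts injective on siblings separate those
  let shift (v : V) : Fin (k + 1) := Fin.ofNat (k + 1) (index v + 1)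
  have shift_val {v : V} (hv : v ≠ P.root) : (shift v : ℕ) = index v + 1 := by
    rw [Fin.val_ofNat]
    exact Nat.mod_eq_of_lt (by have := index_lt hv; omega)
  let col := P.fold 0 fun v c => c + shift v
  have col_eq {v : V} (hv : v ≠ P.root) : col v = col (P.parent v) + shift v :=
    P.fold_of_ne_root _ _ hv
  refine ⟨col, ⟨fun {v} hv h => ?_, fun {u v} hu hv hp h => ?_⟩⟩
  · rw [col_eq hv, add_eq_left] at h
    simpa [h] using shift_val hv
  · rw [col_eq hu, col_eq hv, hp, add_left_cancel_iff] at h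
    have hindex : index u = index v := by
      have := congrArg Fin.val h
      rw [shift_val hu, shift_val hv] at this
      omega
    have hu' := mem_children hu
    rw [hp] at hu'
    exact (List.idxOf_inj hu').1 (by simpa [index, hp] using hindex)

end Children

end ParentMap

namespace SimpleGraph.IsTree

variable {V : Type*} {T : SimpleGraph V}

theorem exists_degree_le_one [Fintype V] [DecidableRel T.Adj] (hT : T.IsTree) :
    ∃ v, T.degree v ≤ 1 := by
  rcases subsingleton_or_nontrivial V with hV | hV
  · obtain ⟨v⟩ := hT.connected.nonempty
    exact ⟨v, (T.degree_lt_card_verts v).le.trans (Fintype.card_le_one_iff_subsingleton.2 hV)⟩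
  · obtain ⟨v, hv⟩ := hT.exists_vert_degree_one_of_nontrivial
    exact ⟨v, hv.le⟩

section RootPath

variable (hT : T.IsTree) (r : V)

noncomputable def rootPath (v : V) : T.Walk v r := (hT.existsUnique_path v r).exists.choose

theorem isPath_rootPath (v : V) : (hT.rootPath r v).IsPath :=
  (hT.existsUnique_path v r).exists.choose_spec

variable {r}

theorem eq_rootPath {v : V} {q : T.Walk v r} (hq : q.IsPath) : q = hT.rootPath r v :=
  (hT.existsUnique_path v r).unique hq (hT.isPath_rootPath r v)

theorem rootPath_self : hT.rootPath r r = .nil := (hT.eq_rootPath .nil).symm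

theorem rootPath_eq_cons {v : V} (hv : v ≠ r) :
    ∃ h : T.Adj v ((hT.rootPath r v).getVert 1),
      hT.rootPath r v = .cons h (hT.rootPath r ((hT.rootPath r v).getVert 1)) := by
  obtain ⟨w, h, q, hq⟩ := Walk.exists_eq_cons_of_ne hv (hT.rootPath r v)
  have hq_isPath : q.IsPath := by
    have := hT.isPath_rootPath r v
    rw [hq] at this
    exact this.of_cons
  obtain rfl := hT.eq_rootPath hq_isPath
  obtain rfl : (hT.rootPath r v).getVert 1 = w := by simp [hq]
  exact ⟨h, hq⟩

theorem length_rootPath_lt [DecidableEq V] {u w : V} (hu : u ∈ (hT.rootPath r w).support)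
    (huw : u ≠ w) : (hT.rootPath r u).length < (hT.rootPath r w).length := by
  -- the root path of `u` is the final segment of any root path through `u`
  have hdrop : (hT.rootPath r w).dropUntil u hu = hT.rootPath r u :=
    hT.eq_rootPath ((hT.isPath_rootPath r w).dropUntil hu)
  have htake : 0 < ((hT.rootPath r w).takeUntil u hu).length :=
    Nat.pos_of_ne_zero fun h => huw (Walk.eq_of_length_eq_zero h).symm
  have := congrArg Walk.length ((hT.rootPath r w).take_spec hu)
  rw [Walk.length_append, hdrop] at this
  omega

end RootPath

theorem exists_parentMap (hT : T.IsTree) (r : V) :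
    ∃ P : ParentMap V, P.root = r ∧ P.graph = T := by
  classical
  let P : ParentMap V :=
    { root := r
      parent := fun v => (hT.rootPath r v).getVert 1
      depth := fun v => (hT.rootPath r v).length
      depth_eq_zero := fun {v} =>
        ⟨fun h => Walk.eq_of_length_eq_zero h, by rintro rfl; simp [hT.rootPath_self]⟩
      depth_parent := fun {v} hv => by
        obtain ⟨_, hpath⟩ := hT.rootPath_eq_cons hv
        conv_lhs => rw [hpath]
        rfl }
  refine ⟨P, rfl, ?_⟩
  ext v w
  rw [P.graph_adj]
  constructor
  · rintro (⟨hv, rfl⟩ | ⟨hw, rfl⟩)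
    · exact (hT.rootPath_eq_cons hv).1
    · exact (hT.rootPath_eq_cons hw).1.symm
  · intro hvw
    -- the root path of the farther endpoint passes through the nearer one
    by_cases hv : v ∈ (hT.rootPath r w).support
    · have hw : w ∉ (hT.rootPath r v).support := fun hw =>
        (hT.length_rootPath_lt hv hvw.ne).not_gt (hT.length_rootPath_lt hw hvw.ne.symm)
      have := hT.eq_rootPath ((hT.isPath_rootPath r v).cons (h := hvw.symm) hw)
      refine Or.inr ⟨fun h => hw (h ▸ (hT.rootPath r v).end_mem_support), ?_⟩
      simp [P, ← this]
    · have := hT.eq_rootPath ((hT.isPath_rootPath r w).cons (h := hvw) hv)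
      refine Or.inl ⟨fun h => hv (h ▸ (hT.rootPath r w).end_mem_support), ?_⟩
      simp [P, ← this]

end SimpleGraph.IsTree

namespace ParentMap

variable {V : Type*} (P : ParentMap V) [DecidableEq V] {k : ℕ} (col : V → Fin (k + 1))

/-- `P.nearest col v i` is the ancestor of `v` (possibly `v` itself) of colour `i` closest
to `v`, if there is one. -/
def nearest : V → Fin (k + 1) → Option V :=
  P.fold (fun _ => none) fun v t => Function.update t (col v) (some v)

theorem nearest_root (i : Fin (k + 1)) :
    P.nearest col P.root i = if i = col P.root then some P.root else none := by
  rw [nearest, fold_eq, if_pos rfl, Function.update_apply]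

theorem nearest_of_ne_root {v : V} (hv : v ≠ P.root) (i : Fin (k + 1)) :
    P.nearest col v i = if i = col v then some v else P.nearest col (P.parent v) i := by
  rw [nearest, fold_eq, if_neg hv, Function.update_apply]

theorem nearest_self (v : V) : P.nearest col v (col v) = some v := by
  by_cases hv : v = P.root
  · subst hv
    rw [nearest_root, if_pos rfl]
  · rw [nearest_of_ne_root _ _ hv, if_pos rfl]

theorem nearest_of_ne {v : V} {i : Fin (k + 1)} (hv : v ≠ P.root) (hi : i ≠ col v) :
    P.nearest col v i = P.nearest col (P.parent v) i := by
  rw [nearest_of_ne_root _ _ hv, if_neg hi]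

theorem nearest_eq_some_of_ne {v u : V} {i : Fin (k + 1)} (h : P.nearest col v i = some u)
    (huv : u ≠ v) : v ≠ P.root ∧ i ≠ col v ∧ P.nearest col (P.parent v) i = some u := by
  have hi : i ≠ col v := fun hi => huv (by simpa [hi, nearest_self] using h.symm)
  have hv : v ≠ P.root := by
    rintro rfl
    simp [nearest_root, hi] at h
  exact ⟨hv, hi, (P.nearest_of_ne col hv hi).symm.trans h⟩

theorem nearest_eq_some {v u : V} {i : Fin (k + 1)} (h : P.nearest col v i = some u) :
    col u = i ∧ (u = v ∨ P.depth u < P.depth v) := by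
  induction v using P.induction generalizing u with
  | root =>
    rw [nearest_root] at h
    split_ifs at h with hi
    cases h
    exact ⟨hi.symm, Or.inl rfl⟩
  | parent v hv ih =>
    rw [nearest_of_ne_root _ _ hv] at h
    split_ifs at h with hi
    · cases h
      exact ⟨hi.symm, Or.inl rfl⟩
    · obtain ⟨hcol, hu⟩ := ih h
      have := P.depth_parent hv
      exact ⟨hcol, Or.inr (by rcases hu with rfl | hu <;> omega)⟩

theorem eq_root_of_nearest_root_eq_some {u : V} {i : Fin (k + 1)}
    (h : P.nearest col P.root i = some u) : u = P.root :=
  (P.nearest_eq_some col h).2.resolve_right (by simp [depth_root])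

theorem nearest_col_root_ne_none (v : V) : P.nearest col v (col P.root) ≠ none := by
  induction v using P.induction with
  | root => simp [nearest_self]
  | parent v hv ih =>
    by_cases hc : col P.root = col v
    · simp [hc, nearest_self]
    · rwa [P.nearest_of_ne col hv hc]

theorem nearest_of_nearest_of_depth_le {z u w : V} (hu : P.nearest col z (col u) = some u)
    (hw : P.nearest col z (col w) = some w) (hdepth : P.depth u ≤ P.depth w) :
    P.nearest col w (col u) = some u := by
  induction z using P.induction generalizing u w with
  | root =>
    obtain rfl := P.eq_root_of_nearest_root_eq_some col hu
    obtain rfl := P.eq_root_of_nearest_root_eq_some col hw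
    exact hu
  | parent z hz ih =>
    obtain rfl | hwz := eq_or_ne w z
    · exact hu
    obtain ⟨-, -, hw'⟩ := P.nearest_eq_some_of_ne col hw hwz
    have hwdepth := (P.nearest_eq_some col hw').2
    have huz : u ≠ z := by
      rintro rfl
      have := P.depth_parent hz
      rcases hwdepth with rfl | hlt <;> omega
    exact ih (P.nearest_eq_some_of_ne col hu huz).2.2 hw' hdepth

theorem nearest_eq_none_of_nearest {z u : V} {j : Fin (k + 1)} (hj : P.nearest col z j = none)
    (hu : P.nearest col z (col u) = some u) : P.nearest col u j = none := by
  induction z using P.induction generalizing u with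
  | root =>
    obtain rfl := P.eq_root_of_nearest_root_eq_some col hu
    exact hj
  | parent z hz ih =>
    obtain rfl | huz := eq_or_ne u z
    · exact hj
    have hjz : j ≠ col z := by
      rintro rfl
      simp [nearest_self] at hj
    exact ih ((P.nearest_of_ne col hz hjz).symm.trans hj) (P.nearest_eq_some_of_ne col hu huz).2.2

theorem parent_eq_of_nearest_eq_except (hcol : P.IsSiblingColoring col) {v w : V}
    {j : Fin (k + 1)} (hvw : v ≠ w) (hdepth : P.depth w ≤ P.depth v)
    (hagree : ∀ i, i ≠ j → P.nearest col v i = P.nearest col w i) :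
    v ≠ P.root ∧ P.parent v = w := by
  have hv : v ≠ P.root := by
    rintro rfl
    exact hvw (P.depth_eq_zero.1 (by simpa [depth_root] using hdepth)).symm
  have hj : j = col v := by
    by_contra hj
    have := (hagree (col v) (Ne.symm hj)).symm.trans (P.nearest_self col v)
    obtain ⟨-, rfl | hlt⟩ := P.nearest_eq_some col this
    exacts [hvw rfl, by omega]
  subst hj
  have hpv := P.depth_parent hv
  -- `parent v` is nearest to `v`, hence to `w`, in its own colour
  have hp : P.nearest col w (col (P.parent v)) = some (P.parent v) := by
    have hne := (hcol.ne_parent hv).symm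
    rw [← hagree _ hne, P.nearest_of_ne col hv hne, nearest_self]
  refine ⟨hv, ?_⟩
  obtain ⟨-, hpw | hlt⟩ := P.nearest_eq_some col hp
  · exact hpw
  exfalso
  obtain ⟨hw, -, hp'⟩ := P.nearest_eq_some_of_ne col hp (by rintro rfl; omega)
  have hpw := P.depth_parent hw
  have hparent : P.parent v = P.parent w := by
    obtain ⟨-, h | h⟩ := P.nearest_eq_some col hp'
    exacts [h, by omega]
  have hcolour : col w = col v := by
    by_contra hcolour
    have := (hagree (col w) hcolour).trans (P.nearest_self col w)
    obtain ⟨-, h | h⟩ := P.nearest_eq_some col this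
    exacts [hvw h.symm, by omega]
  exact hvw (hcol.injOn_siblings hv hw hparent hcolour.symm)

/-- The ground set is `V ⊕ Fin (k + 1)`, where `Sum.inr i` stands in for a missing ancestor of
colour `i`. -/
def token (v : V) (i : Fin (k + 1)) : V ⊕ Fin (k + 1) :=
  (P.nearest col v i).elim (Sum.inr i) Sum.inl

def tokens (v : V) : Finset (V ⊕ Fin (k + 1)) := univ.image (P.token col v)

theorem elim_token (v : V) (i : Fin (k + 1)) : Sum.elim col id (P.token col v i) = i := by
  unfold token
  cases h : P.nearest col v i
  · rfl
  · exact (P.nearest_eq_some col h).1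

theorem token_eq_token_iff {v w : V} {i : Fin (k + 1)} :
    P.token col v i = P.token col w i ↔ P.nearest col v i = P.nearest col w i := by
  unfold token
  cases P.nearest col v i <;> cases P.nearest col w i <;> simp

theorem mem_tokens {z : V} {a : V ⊕ Fin (k + 1)} :
    a ∈ P.tokens col z ↔ P.token col z (Sum.elim col id a) = a := by
  simp only [tokens, mem_image, mem_univ, true_and]
  refine ⟨?_, fun h => ⟨_, h⟩⟩
  rintro ⟨i, rfl⟩
  rw [elim_token]

theorem inl_mem_tokens {z u : V} :
    Sum.inl u ∈ P.tokens col z ↔ P.nearest col z (col u) = some u := by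
  rw [mem_tokens, Sum.elim_inl, token]
  cases P.nearest col z (col u) <;> simp

theorem inr_mem_tokens {z : V} {j : Fin (k + 1)} :
    Sum.inr j ∈ P.tokens col z ↔ P.nearest col z j = none := by
  rw [mem_tokens, Sum.elim_inr, id, token]
  cases P.nearest col z j <;> simp

theorem card_tokens (v : V) : #(P.tokens col v) = k + 1 := by
  rw [tokens, card_image_of_injective, card_univ, Fintype.card_fin]
  intro i i' h
  simpa only [elim_token] using congrArg (Sum.elim col id) h

theorem eq_of_mem_tokens {z : V} {a b : V ⊕ Fin (k + 1)} (ha : a ∈ P.tokens col z)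
    (hb : b ∈ P.tokens col z) (h : Sum.elim col id a = Sum.elim col id b) : a = b := by
  rw [mem_tokens] at ha hb
  rw [← ha, ← hb, h]

theorem tokens_injective : Function.Injective (P.tokens col) := by
  intro v w h
  have hv : Sum.inl v ∈ P.tokens col w := h ▸ (P.inl_mem_tokens col).2 (P.nearest_self col v)
  have hw : Sum.inl w ∈ P.tokens col v := h ▸ (P.inl_mem_tokens col).2 (P.nearest_self col w)
  obtain ⟨-, h₁⟩ := P.nearest_eq_some col ((P.inl_mem_tokens col).1 hv)
  obtain ⟨-, h₂⟩ := P.nearest_eq_some col ((P.inl_mem_tokens col).1 hw)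
  by_contra hvw
  have := h₁.resolve_left hvw
  have := h₂.resolve_left (Ne.symm hvw)
  omega

theorem exists_tokens_eq (hk : 1 ≤ k) (I : Finset (V ⊕ Fin (k + 1))) (hcard : #I = k + 1)
    (hI : ∀ a ∈ I, ∀ b ∈ I, a ≠ b → ∃ z, a ∈ P.tokens col z ∧ b ∈ P.tokens col z) :
    ∃ v, P.tokens col v = I := by
  have hcolour : Set.InjOn (Sum.elim col id) I := fun a ha b hb h => by
    by_contra hab
    obtain ⟨z, haz, hbz⟩ := hI a ha b hb hab
    exact hab (P.eq_of_mem_tokens col haz hbz h)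
  -- the member of colour `col root` is a vertex, as every table has an entry there
  have hvertex : ∃ u, Sum.inl u ∈ I := by
    have hsurj : I.image (Sum.elim col id) = univ :=
      eq_univ_of_card _ (by rw [card_image_of_injOn hcolour, hcard, Fintype.card_fin])
    obtain ⟨a, ha, hacol⟩ := mem_image.1 (hsurj ▸ mem_univ (col P.root))
    rcases a with u | j
    · exact ⟨u, ha⟩
    obtain ⟨b, hb, hba⟩ := exists_mem_ne (by omega : 1 < #I) (Sum.inr j)
    obtain ⟨z, hjz, -⟩ := hI _ ha b hb hba.symm
    rw [inr_mem_tokens, ← show col P.root = j from hacol.symm] at hjz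
    exact absurd hjz (P.nearest_col_root_ne_none col z)
  -- the deepest vertex of `I` works
  obtain ⟨v, hvI, hvmax⟩ := exists_max_image (I.preimage Sum.inl Sum.inl_injective.injOn)
    P.depth (by simpa [Finset.Nonempty] using hvertex)
  rw [mem_preimage] at hvI
  refine ⟨v, (eq_of_subset_of_card_le (fun a ha => ?_) (by rw [hcard, card_tokens])).symm⟩
  obtain rfl | hav := eq_or_ne a (Sum.inl v)
  · exact (P.inl_mem_tokens col).2 (P.nearest_self col v)
  obtain ⟨z, haz, hvz⟩ := hI a ha _ hvI hav
  rw [inl_mem_tokens] at hvz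
  rcases a with u | j
  · rw [inl_mem_tokens] at haz ⊢
    exact P.nearest_of_nearest_of_depth_le col haz hvz (hvmax u (mem_preimage.2 ha))
  · rw [inr_mem_tokens] at haz ⊢
    exact P.nearest_eq_none_of_nearest col haz hvz

theorem tokens_sdiff_eq_singleton {v w : V} {c : Fin (k + 1)}
    (hagree : ∀ i, i ≠ c → P.token col v i = P.token col w i)
    (hc : P.token col v c ≠ P.token col w c) :
    P.tokens col v \ P.tokens col w = {P.token col v c} := by
  ext a
  simp only [mem_sdiff, mem_singleton, mem_tokens]
  constructor
  · rintro ⟨hav, haw⟩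
    have hi : Sum.elim col id a = c := by
      by_contra hi
      exact haw ((hagree _ hi).symm.trans hav)
    rw [← hav, hi]
  · rintro rfl
    rw [elim_token]
    exact ⟨rfl, fun h => hc h.symm⟩

theorem token_eq_of_tokens_sdiff_eq_singleton {v w : V} {a : V ⊕ Fin (k + 1)}
    (h : P.tokens col v \ P.tokens col w = {a}) {i : Fin (k + 1)} (hi : i ≠ Sum.elim col id a) :
    P.token col v i = P.token col w i := by
  by_contra hne
  have hmem : P.token col v i ∈ P.tokens col v \ P.tokens col w := by
    simp only [mem_sdiff, mem_tokens, elim_token, true_and]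
    exact fun h => hne h.symm
  rw [h, mem_singleton] at hmem
  exact hi (by rw [← hmem, elim_token])

theorem tokens_sdiff_parent {v : V} (hv : v ≠ P.root) :
    P.tokens col v \ P.tokens col (P.parent v) = {Sum.inl v} ∧
      P.tokens col (P.parent v) \ P.tokens col v = {P.token col (P.parent v) (col v)} ∧
      (separationGraph (P.tokens col)).Adj (Sum.inl v) (P.token col (P.parent v) (col v)) := by
  have hnearest : P.nearest col (P.parent v) (col v) ≠ some v := fun h => by
    have := P.depth_parent hv
    obtain ⟨-, h | h⟩ := P.nearest_eq_some col h
    exacts [P.parent_ne hv h.symm, by omega]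
  have htoken : P.token col v (col v) = Sum.inl v := by simp [token, nearest_self]
  have hc : P.token col v (col v) ≠ P.token col (P.parent v) (col v) := by
    rw [Ne, token_eq_token_iff, nearest_self]
    exact hnearest.symm
  have hagree (i : Fin (k + 1)) (hi : i ≠ col v) : P.token col v i = P.token col (P.parent v) i :=
    (P.token_eq_token_iff col).2 (P.nearest_of_ne col hv hi)
  refine ⟨htoken ▸ P.tokens_sdiff_eq_singleton col hagree hc,
    P.tokens_sdiff_eq_singleton col (fun i hi => (hagree i hi).symm) hc.symm,
    htoken ▸ hc, fun z hvz hpz => hnearest ?_⟩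
  rw [mem_tokens, elim_token, token_eq_token_iff] at hpz
  rw [← hpz, ← (P.inl_mem_tokens col).1 hvz]

theorem graph_adj_iff_tokens (hcol : P.IsSiblingColoring col) {v w : V} :
    P.graph.Adj v w ↔ ∃ a b, P.tokens col v \ P.tokens col w = {a} ∧
      P.tokens col w \ P.tokens col v = {b} ∧ (separationGraph (P.tokens col)).Adj a b := by
  rw [graph_adj]
  constructor
  · rintro (⟨hv, rfl⟩ | ⟨hw, rfl⟩)
    · exact ⟨_, _, P.tokens_sdiff_parent col hv⟩
    · obtain ⟨h₁, h₂, hsep⟩ := P.tokens_sdiff_parent col hw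
      exact ⟨_, _, h₂, h₁, hsep.symm⟩
  · rintro ⟨a, b, hab, -, -⟩
    have hvw : v ≠ w := by
      rintro rfl
      simp at hab
    have hagree (i : Fin (k + 1)) (hi : i ≠ Sum.elim col id a) :
        P.nearest col v i = P.nearest col w i :=
      (P.token_eq_token_iff col).1 (P.token_eq_of_tokens_sdiff_eq_singleton col hab hi)
    rcases le_total (P.depth w) (P.depth v) with h | h
    · exact Or.inl (P.parent_eq_of_nearest_eq_except col hcol hvw h hagree)
    · exact Or.inr (P.parent_eq_of_nearest_eq_except col hcol hvw.symm h
        fun i hi => (hagree i hi).symm)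

end ParentMap

theorem stmt13 {V : Type*} [Fintype V] (k : ℕ) (hk : 2 ≤ k)
    (T : SimpleGraph V) [DecidableRel T.Adj] (hT : T.IsTree)
    (hdeg : ∀ v, T.degree v ≤ k + 1) :
    ∃ (m : ℕ) (G : SimpleGraph (Fin m)), Nonempty (TS G (k + 1) ≃g T) := by
  classical
  obtain ⟨r, hr⟩ := hT.exists_degree_le_one
  obtain ⟨P, rfl, rfl⟩ := hT.exists_parentMap r
  obtain ⟨col, hcol⟩ := P.exists_isSiblingColoring (P.card_children_le (by omega) hr hdeg)
  obtain ⟨iso⟩ := nonempty_TS_separationGraph_iso P.graph (P.tokens col) (k + 1)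
    (P.card_tokens col) (P.tokens_injective col) (P.exists_tokens_eq col (by omega))
    fun _ _ => P.graph_adj_iff_tokens col hcol
  obtain ⟨iso'⟩ := nonempty_TS_iso_of_iso
    (Iso.map (Fintype.equivFin (V ⊕ Fin (k + 1))) (separationGraph (P.tokens col))) (k + 1)
  exact ⟨_, _, ⟨iso'.symm.trans iso⟩⟩
end

section
/- The tree D_{1,n,2}, obtained from a path on n vertices by attaching one leaf at one end and two leaves at the other end, is isomorphic to TS_2(G) for some graph G if and only if n = 3. -/
open SimpleGraph

/-!
A neighbour of a vertex `{u, v}` of `TS_2(G)` is obtained by sliding `u` or `v`. If `TS_2(G)` has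
no isolated vertex, two distinct leaves `{u, x₁}`, `{u, x₂}` at `{u, v}` cannot both come from
sliding `v`: otherwise `{x₁, x₂}` is independent, and any neighbour of it yields a second neighbour
of one of the two leaves. So a vertex carries at most two leaves, which rules out `n = 1`.
For `n ≥ 2`, the last path vertex `c` carries two leaves, which slide different tokens, and its
path neighbour `q` slides the same token as one of them. Since all vertices but `c` have degree at
most two, chasing the neighbours of `q` shows that `{x₁, x₂}` is a leaf at the other neighbour `q'`
of `q`. The only leaf of `D_{1,n,2}` away from `c` hangs off the first path vertex, so `q'` is the
first path vertex and `n = 3`.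
-/

namespace SimpleGraph

variable {V V' : Type*} {H : SimpleGraph V} {H' : SimpleGraph V'}

def IsPendant (H : SimpleGraph V) (b c : V) : Prop := H.neighborSet b = {c}

namespace IsPendant

variable {b c x : V}

lemma adj (h : H.IsPendant b c) : H.Adj b c := by
  rw [← mem_neighborSet, h]; rfl

lemma eq_of_adj (h : H.IsPendant b c) (hx : H.Adj b x) : x = c := by
  rwa [← mem_neighborSet, h] at hx

lemma not_adj_of_adj (h : H.IsPendant b c) (hx : H.Adj c x) : ¬ H.Adj b x := fun hbx =>
  H.irrefl (h.eq_of_adj hbx ▸ hx)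

end IsPendant

lemma eq_or_eq_of_encard_neighborSet_le_two {x a b y : V} (hx : (H.neighborSet x).encard ≤ 2)
    (ha : H.Adj x a) (hb : H.Adj x b) (hab : a ≠ b) (hy : H.Adj x y) : y = a ∨ y = b := by
  by_contra! h
  have h3 : ({a, b, y} : Set V).encard = 3 :=
    Set.encard_eq_three.2 ⟨a, b, y, hab, h.1.symm, h.2.symm, rfl⟩
  have : ({a, b, y} : Set V) ⊆ H.neighborSet x := by
    simp [Set.insert_subset_iff, ha, hb, hy]
  have := Set.encard_le_encard this
  rw [h3] at this
  exact absurd (this.trans hx) (by norm_num)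

lemma encard_neighborSet_le_two_of_subset {x a b : V} (h : H.neighborSet x ⊆ {a, b}) :
    (H.neighborSet x).encard ≤ 2 :=
  (Set.encard_le_encard h).trans <| (Set.encard_insert_le _ _).trans (by norm_num)

namespace Iso

variable (e : H ≃g H')

lemma neighborSet_apply (v : V) : H'.neighborSet (e v) = e '' H.neighborSet v :=
  e.image_neighborSet.symm

lemma isPendant_apply_iff {b c : V} : H'.IsPendant (e b) (e c) ↔ H.IsPendant b c := by
  rw [IsPendant, IsPendant, neighborSet_apply, ← Set.image_singleton,
    e.injective.image_injective.eq_iff]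

lemma encard_neighborSet_apply (v : V) :
    (H'.neighborSet (e v)).encard = (H.neighborSet v).encard := by
  rw [neighborSet_apply, e.injective.encard_image]

end Iso

end SimpleGraph

lemma Finset.pair_eq_pair_iff {α : Type*} [DecidableEq α] {x y z w : α} :
    ({x, y} : Finset α) = {z, w} ↔ x = z ∧ y = w ∨ x = w ∧ y = z := by
  rw [← Finset.coe_inj, Finset.coe_pair, Finset.coe_pair, Set.pair_eq_pair_iff]

lemma Finset.pair_right_inj {α : Type*} [DecidableEq α] {a b c : α} :
    ({a, b} : Finset α) = {a, c} ↔ b = c := by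
  rw [Finset.pair_eq_pair_iff]
  grind

namespace TS

section

variable {W : Type*} {G : SimpleGraph W} {I J : {I : Finset W // TSVert G 2 I}} {a b c : W}

lemma ne_of_mem_of_not_mem (ha : a ∈ I.1) (ha' : a ∉ J.1) : I ≠ J :=
  fun h => ha' (h ▸ ha)

variable [DecidableEq W]

lemma ne_of_val_eq_pair (h : I.1 = {a, b}) : a ≠ b := by
  rintro rfl
  simpa [h] using I.2.1

lemma not_adj_of_val_eq_pair (h : I.1 = {a, b}) : ¬ G.Adj a b :=
  I.2.2 a (by simp [h]) b (by simp [h])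

def pair (a b : W) (hab : a ≠ b) (h : ¬ G.Adj a b) : {I : Finset W // TSVert G 2 I} :=
  ⟨{a, b}, Finset.card_pair hab, by
    simp only [Finset.mem_insert, Finset.mem_singleton]
    rintro u (rfl | rfl) v (rfl | rfl)
    exacts [G.irrefl, h, fun h' => h h'.symm, G.irrefl]⟩

@[simp]
lemma val_pair (a b : W) (hab : a ≠ b) (h : ¬ G.Adj a b) : (pair a b hab h).1 = {a, b} := rfl

lemma adj_iff : (TS G 2).Adj I J ↔
    I ≠ J ∧ ∃ u v, I.1 \ J.1 = {u} ∧ J.1 \ I.1 = {v} ∧ G.Adj u v := by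
  simp only [TS, SimpleGraph.fromRel_adj, ← Finset.coe_sdiff, Finset.coe_eq_singleton]
  refine and_congr_right fun _ => ⟨?_, Or.inl⟩
  rintro (h | ⟨u, v, h₁, h₂, h⟩)
  exacts [h, ⟨v, u, h₂, h₁, h.symm⟩]

lemma exists_eq_pair_of_adj (h : (TS G 2).Adj I J) :
    ∃ a b c, I.1 = {a, b} ∧ J.1 = {a, c} ∧ G.Adj b c := by
  obtain ⟨-, b, c, hIJ, hJI, hbc⟩ := adj_iff.1 h
  have hcard : (I.1 ∩ J.1).card = 1 := by
    have := Finset.card_sdiff_add_card_inter I.1 J.1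
    rw [hIJ, I.2.1, Finset.card_singleton] at this
    omega
  obtain ⟨a, ha⟩ := Finset.card_eq_one.1 hcard
  refine ⟨a, b, c, ?_, ?_, hbc⟩
  · rw [← Finset.sdiff_union_inter I.1 J.1, hIJ, ha, Finset.union_comm]; rfl
  · rw [← Finset.sdiff_union_inter J.1 I.1, hJI, Finset.inter_comm, ha, Finset.union_comm]; rfl

lemma adj_of_val_eq_pair (hI : I.1 = {a, b}) (hJ : J.1 = {a, c}) (h : G.Adj b c) :
    (TS G 2).Adj I J := by
  have hab := ne_of_val_eq_pair hI
  have hac := ne_of_val_eq_pair hJ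
  have hbc := h.ne
  refine adj_iff.2 ⟨ne_of_mem_of_not_mem (a := b) (by simp [hI]) (by simp [hJ, hab.symm, hbc]),
    b, c, ?_, ?_, h⟩
  · ext x; simp only [hI, hJ, Finset.mem_sdiff, Finset.mem_insert, Finset.mem_singleton]; grind
  · ext x; simp only [hI, hJ, Finset.mem_sdiff, Finset.mem_insert, Finset.mem_singleton]; grind

lemma adj_iff_of_val_eq_pair (hI : I.1 = {a, b}) (hJ : J.1 = {a, c}) :
    (TS G 2).Adj I J ↔ G.Adj b c := by
  refine ⟨fun h => ?_, adj_of_val_eq_pair hI hJ⟩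
  obtain ⟨hne, u, v, hIJ, hJI, huv⟩ := adj_iff.1 h
  have hbc : b ≠ c := by
    rintro rfl
    exact hne (Subtype.ext (hI.trans hJ.symm))
  have hb : b ∈ I.1 \ J.1 := by simp [hI, hJ, hbc, (ne_of_val_eq_pair hI).symm]
  have hc : c ∈ J.1 \ I.1 := by simp [hI, hJ, hbc.symm, (ne_of_val_eq_pair hJ).symm]
  rw [hIJ, Finset.mem_singleton] at hb
  rw [hJI, Finset.mem_singleton] at hc
  rwa [hb, hc]

lemma exists_val_eq_pair_of_adj {u v : W} (h : (TS G 2).Adj I J) (hI : I.1 = {u, v}) :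
    ∃ y, J.1 = {u, y} ∨ J.1 = {v, y} := by
  obtain ⟨a, b, c, ha, hJ, -⟩ := exists_eq_pair_of_adj h
  rw [hI, Finset.pair_eq_pair_iff] at ha
  rcases ha with ⟨h, -⟩ | ⟨-, h⟩
  exacts [⟨c, .inl (h ▸ hJ)⟩, ⟨c, .inr (h ▸ hJ)⟩]

end

section

variable {W : Type*} [DecidableEq W] {G : SimpleGraph W}
  {c q q' b₁ b₂ b₃ w g : {I : Finset W // TSVert G 2 I}} {u v x₁ x₂ x₃ s z : W}

lemma eq_of_isPendant_of_adj (hb : (TS G 2).IsPendant b₁ c) (hc : c.1 = {u, v})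
    (h₁ : b₁.1 = {u, x₁}) (hzu : z ≠ u) (huz : ¬ G.Adj u z) (hz : G.Adj x₁ z) : z = v := by
  have hJ := hb.eq_of_adj (adj_of_val_eq_pair h₁ (rfl : (pair u z hzu.symm huz).1 = _) hz)
  exact Finset.pair_right_inj.1 ((congrArg Subtype.val hJ).trans hc)

lemma false_of_isPendant_of_adj (hb₁ : (TS G 2).IsPendant b₁ c) (hb₂ : (TS G 2).IsPendant b₂ c)
    (hc : c.1 = {u, v}) (h₁ : b₁.1 = {u, x₁}) (h₂ : b₂.1 = {u, x₂}) (hw : w.1 = {x₁, x₂})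
    (hg : g.1 = {x₁, z}) (hwg : (TS G 2).Adj w g) : False := by
  have hx₁v : G.Adj x₁ v := (adj_iff_of_val_eq_pair h₁ hc).1 hb₁.adj
  have hx₁c : x₁ ∉ c.1 := by simp [hc, (ne_of_val_eq_pair h₁).symm, hx₁v.ne]
  have hzu : z ≠ u := by
    rintro rfl
    have hgb : g = b₁ := Subtype.ext (by rw [hg, h₁, Finset.pair_comm])
    exact ne_of_mem_of_not_mem (by simp [hw]) hx₁c (hb₁.eq_of_adj (hgb ▸ hwg.symm))
  have huz : ¬ G.Adj u z := fun h =>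
    ne_of_mem_of_not_mem (by simp [hg]) hx₁c
      (hb₁.eq_of_adj (adj_of_val_eq_pair (by rw [h₁, Finset.pair_comm]) hg h))
  have hzv : z = v := eq_of_isPendant_of_adj hb₂ hc h₂ hzu huz
    ((adj_iff_of_val_eq_pair hw hg).1 hwg)
  exact not_adj_of_val_eq_pair hg (hzv ▸ hx₁v)

lemma false_of_isPendant_of_isPendant (hT : ∀ I, ((TS G 2).neighborSet I).Nonempty)
    (hb₁ : (TS G 2).IsPendant b₁ c) (hb₂ : (TS G 2).IsPendant b₂ c) (h₁₂ : b₁ ≠ b₂)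
    (hc : c.1 = {u, v}) (h₁ : b₁.1 = {u, x₁}) (h₂ : b₂.1 = {u, x₂}) : False := by
  have hx : x₁ ≠ x₂ := by
    rintro rfl
    exact h₁₂ (Subtype.ext (h₁.trans h₂.symm))
  have hnadj : ¬ G.Adj x₁ x₂ := fun h => hb₁.not_adj_of_adj hb₂.adj.symm (adj_of_val_eq_pair h₁ h₂ h)
  obtain ⟨g, hg⟩ := hT (pair x₁ x₂ hx hnadj)
  obtain ⟨z, hgz | hgz⟩ := exists_val_eq_pair_of_adj hg rfl
  · exact false_of_isPendant_of_adj hb₁ hb₂ hc h₁ h₂ rfl hgz hg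
  · exact false_of_isPendant_of_adj hb₂ hb₁ hc h₂ h₁ (Finset.pair_comm _ _) hgz hg

lemma exists_val_eq_pair_of_isPendant (hT : ∀ I, ((TS G 2).neighborSet I).Nonempty)
    (hb₁ : (TS G 2).IsPendant b₁ c) (hb₂ : (TS G 2).IsPendant b₂ c) (h₁₂ : b₁ ≠ b₂)
    (hc : c.1 = {u, v}) (h₁ : b₁.1 = {u, x₁}) : ∃ y, b₂.1 = {v, y} := by
  obtain ⟨y, hy | hy⟩ := exists_val_eq_pair_of_adj hb₂.adj.symm hc
  exacts [(false_of_isPendant_of_isPendant hT hb₁ hb₂ h₁₂ hc h₁ hy).elim, ⟨y, hy⟩]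

lemma adj_of_isPendant_of_isPendant (hb₁ : (TS G 2).IsPendant b₁ c)
    (hb₂ : (TS G 2).IsPendant b₂ c) (hc : c.1 = {u, v}) (h₁ : b₁.1 = {u, x₁})
    (h₂ : b₂.1 = {v, x₂}) : G.Adj x₁ x₂ := by
  have hx₁v : G.Adj x₁ v := (adj_iff_of_val_eq_pair h₁ hc).1 hb₁.adj
  have hx₂u : G.Adj x₂ u :=
    (adj_iff_of_val_eq_pair h₂ (hc.trans (Finset.pair_comm _ _))).1 hb₂.adj
  by_contra h
  have hx₁₂ : x₁ ≠ x₂ := fun e => not_adj_of_val_eq_pair h₂ (e ▸ hx₁v).symm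
  have hJ := hb₁.eq_of_adj
    (adj_of_val_eq_pair (by rw [h₁, Finset.pair_comm]) (val_pair x₁ x₂ hx₁₂ h) hx₂u.symm)
  exact ne_of_mem_of_not_mem (a := x₁) (by simp)
    (by simp [hc, hx₁v.ne, (ne_of_val_eq_pair h₁).symm]) hJ

theorem false_of_three_isPendant (hT : ∀ I, ((TS G 2).neighborSet I).Nonempty)
    (hb₁ : (TS G 2).IsPendant b₁ c) (hb₂ : (TS G 2).IsPendant b₂ c)
    (hb₃ : (TS G 2).IsPendant b₃ c) (h₁₂ : b₁ ≠ b₂) (h₁₃ : b₁ ≠ b₃) (h₂₃ : b₂ ≠ b₃) : False := by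
  obtain ⟨u, v, x, hc, h₁, -⟩ := exists_eq_pair_of_adj hb₁.adj.symm
  obtain ⟨y, h₂⟩ := exists_val_eq_pair_of_isPendant hT hb₁ hb₂ h₁₂ hc h₁
  obtain ⟨z, h₃⟩ := exists_val_eq_pair_of_isPendant hT hb₁ hb₃ h₁₃ hc h₁
  exact false_of_isPendant_of_isPendant hT hb₂ hb₃ h₂₃ (by rw [hc, Finset.pair_comm]) h₂ h₃

lemma val_ne_pair_of_isPendant (hdeg : ∀ I, I ≠ c → ((TS G 2).neighborSet I).encard ≤ 2)
    (hb₁ : (TS G 2).IsPendant b₁ c) (hb₂ : (TS G 2).IsPendant b₂ c)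
    (hc : c.1 = {u, v}) (hq : q.1 = {u, x₁}) (h₁ : b₁.1 = {u, x₂}) (h₂ : b₂.1 = {v, x₃})
    (hw : w.1 = {x₁, x₂}) (hcq : (TS G 2).Adj c q) (hqq' : (TS G 2).Adj q q')
    (hq'c : q' ≠ c) (hcq' : ¬ (TS G 2).Adj c q') : q'.1 ≠ {u, s} := by
  intro hq'
  have hc' : c.1 = {v, u} := by rw [hc, Finset.pair_comm]
  have hx₁v : G.Adj x₁ v := (adj_iff_of_val_eq_pair hq hc).1 hcq.symm
  have hx₂v : G.Adj x₂ v := (adj_iff_of_val_eq_pair h₁ hc).1 hb₁.adj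
  have hx₃u : G.Adj x₃ u := (adj_iff_of_val_eq_pair h₂ hc').1 hb₂.adj
  have hx₁s : G.Adj x₁ s := (adj_iff_of_val_eq_pair hq hq').1 hqq'
  have hus := not_adj_of_val_eq_pair hq'
  have hsu : s ≠ u := (ne_of_val_eq_pair hq').symm
  have hsv : s ≠ v := fun h => hq'c (Subtype.ext (by rw [hq', hc, h]))
  have hq'b₁ : q' ≠ b₁ := fun h => hcq' (h ▸ hb₁.adj.symm)
  have hsx₂ : s ≠ x₂ := fun h => hq'b₁ (Subtype.ext (by rw [hq', h₁, h]))
  have hsx₃ : s ≠ x₃ := fun h => hus (h ▸ hx₃u.symm)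
  have hsv' : ¬ G.Adj s v := fun h => hcq' ((adj_iff_of_val_eq_pair hq' hc).2 h).symm
  have hsx₂' : ¬ G.Adj s x₂ := fun h => hsv (eq_of_isPendant_of_adj hb₁ hc h₁ hsu hus h.symm)
  have hsx₃' : ¬ G.Adj s x₃ := fun h =>
    hsu (eq_of_isPendant_of_adj hb₂ hc' h₂ hsv (fun h' => hsv' h'.symm) h.symm)
  -- `{x₂, s}` has degree at most two, but it is adjacent to `w`, `{v, s}` and `{s, x₃}`.
  let vs := pair v s hsv.symm fun h => hsv' h.symm
  let x₂s := pair x₂ s hsx₂.symm fun h => hsx₂' h.symm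
  let sx₃ := pair s x₃ hsx₃ hsx₃'
  have hx₂s_w : (TS G 2).Adj x₂s w :=
    adj_of_val_eq_pair rfl (by rw [hw, Finset.pair_comm]) hx₁s.symm
  have hx₂s_vs : (TS G 2).Adj x₂s vs :=
    adj_of_val_eq_pair (Finset.pair_comm x₂ s) (Finset.pair_comm v s) hx₂v
  have hx₂s_sx₃ : (TS G 2).Adj x₂s sx₃ := adj_of_val_eq_pair (Finset.pair_comm x₂ s)
    (rfl : sx₃.1 = _) (adj_of_isPendant_of_isPendant hb₁ hb₂ hc h₁ h₂)
  rcases eq_or_eq_of_encard_neighborSet_le_two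
    (hdeg x₂s (ne_of_mem_of_not_mem (a := x₂) (by simp [x₂s])
      (by simp [hc, hx₂v.ne, (ne_of_val_eq_pair h₁).symm])))
    hx₂s_w hx₂s_vs (ne_of_mem_of_not_mem (a := x₁) (by simp [hw])
      (by simp [vs, hx₁v.ne, hx₁s.ne])) hx₂s_sx₃ with h | h
  · exact ne_of_mem_of_not_mem (a := s) (by simp [sx₃]) (by simp [hw, hx₁s.ne.symm, hsx₂]) h
  · exact ne_of_mem_of_not_mem (a := x₃) (by simp [sx₃])
      (by simp [vs, (ne_of_val_eq_pair h₂).symm, hsx₃.symm]) h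

lemma isPendant_of_val_eq_pair (hT : ∀ I, ((TS G 2).neighborSet I).Nonempty)
    (hq₂ : ((TS G 2).neighborSet q).encard ≤ 2) (hb₁ : (TS G 2).IsPendant b₁ c)
    (hc : c.1 = {u, v}) (hq : q.1 = {u, x₁}) (h₁ : b₁.1 = {u, x₂}) (hw : w.1 = {x₁, x₂})
    (hcq : (TS G 2).Adj c q) (hqq' : (TS G 2).Adj q q') (hq'c : q' ≠ c)
    (hq' : q'.1 = {x₁, s}) : (TS G 2).IsPendant w q' := by
  have hx₁v : G.Adj x₁ v := (adj_iff_of_val_eq_pair hq hc).1 hcq.symm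
  have hx₂v : G.Adj x₂ v := (adj_iff_of_val_eq_pair h₁ hc).1 hb₁.adj
  have hq_comm : q.1 = {x₁, u} := by rw [hq, Finset.pair_comm]
  have hus : G.Adj u s := (adj_iff_of_val_eq_pair hq_comm hq').1 hqq'
  have hux₁ := ne_of_val_eq_pair hq
  have hux₂ := ne_of_val_eq_pair h₁
  have hNq : ∀ {J}, (TS G 2).Adj q J → J = c ∨ J = q' :=
    eq_or_eq_of_encard_neighborSet_le_two hq₂ hcq.symm hqq' hq'c.symm
  refine (hT w).subset_singleton_iff.1 fun g (hg : (TS G 2).Adj w g) => ?_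
  obtain ⟨z, hgz | hgz⟩ := exists_val_eq_pair_of_adj hg hw
  · have hx₂z : G.Adj x₂ z := (adj_iff_of_val_eq_pair hw hgz).1 hg
    by_contra hgq'
    have hgq : ¬ (TS G 2).Adj q g := fun h => (hNq h).elim
      (ne_of_mem_of_not_mem (a := x₁) (by simp [hgz]) (by simp [hc, hux₁.symm, hx₁v.ne])) hgq'
    have hzu : z ≠ u := fun h => not_adj_of_val_eq_pair h₁ (h ▸ hx₂z).symm
    have hzv : z = v := eq_of_isPendant_of_adj hb₁ hc h₁ hzu
      (fun h => hgq (adj_of_val_eq_pair hq_comm hgz h)) hx₂z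
    exact not_adj_of_val_eq_pair hgz (hzv ▸ hx₁v)
  · have hx₁z : G.Adj x₁ z := (adj_iff_of_val_eq_pair (by rw [hw, Finset.pair_comm]) hgz).1 hg
    have hzu : z ≠ u := fun h => not_adj_of_val_eq_pair hq (h ▸ hx₁z).symm
    have huz : ¬ G.Adj u z := fun h =>
      ne_of_mem_of_not_mem (a := x₂) (by simp [hgz]) (by simp [hc, hux₂.symm, hx₂v.ne])
        (hb₁.eq_of_adj (adj_of_val_eq_pair (by rw [h₁, Finset.pair_comm]) hgz h))
    rcases hNq (adj_of_val_eq_pair hq (val_pair u z hzu.symm huz) hx₁z) with h | h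
    · have hzv : z = v := Finset.pair_right_inj.1 ((congrArg Subtype.val h).trans hc)
      exact absurd (hzv ▸ hx₂v) (not_adj_of_val_eq_pair hgz)
    · exact absurd h (ne_of_mem_of_not_mem (a := u) (by simp) (by simp [hq', hux₁, hus.ne]))

lemma exists_isPendant_of_val_eq_pair (hT : ∀ I, ((TS G 2).neighborSet I).Nonempty)
    (hdeg : ∀ I, I ≠ c → ((TS G 2).neighborSet I).encard ≤ 2)
    (hb₁ : (TS G 2).IsPendant b₁ c) (hb₂ : (TS G 2).IsPendant b₂ c)
    (hc : c.1 = {u, v}) (hq : q.1 = {u, x₁}) (h₁ : b₁.1 = {u, x₂}) (h₂ : b₂.1 = {v, x₃})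
    (hcq : (TS G 2).Adj c q) (hqq' : (TS G 2).Adj q q') (hq'c : q' ≠ c)
    (hcq' : ¬ (TS G 2).Adj c q') :
    ∃ w, (TS G 2).IsPendant w q' ∧ w ≠ b₁ ∧ w ≠ b₂ := by
  have hx₂v : G.Adj x₂ v := (adj_iff_of_val_eq_pair h₁ hc).1 hb₁.adj
  have hqb₁ : ¬ (TS G 2).Adj q b₁ := fun h => hb₁.not_adj_of_adj hcq h.symm
  have hx₁₂ : x₁ ≠ x₂ := by
    rintro rfl
    obtain rfl : q = b₁ := Subtype.ext (hq.trans h₁.symm)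
    exact hq'c (hb₁.eq_of_adj hqq')
  let w := pair x₁ x₂ hx₁₂ fun h => hqb₁ (adj_of_val_eq_pair hq h₁ h)
  obtain ⟨s, hs | hs⟩ := exists_val_eq_pair_of_adj hqq' hq
  · exact absurd hs (val_ne_pair_of_isPendant hdeg hb₁ hb₂ hc hq h₁ h₂ (rfl : w.1 = _) hcq
      hqq' hq'c hcq')
  refine ⟨w, isPendant_of_val_eq_pair hT (hdeg q fun h => (TS G 2).irrefl (h ▸ hcq)) hb₁ hc hq
      h₁ (rfl : w.1 = _) hcq hqq' hq'c hs, ?_, ?_⟩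
  · exact ne_of_mem_of_not_mem (a := x₁) (by simp [w])
      (by simp [h₁, hx₁₂, (ne_of_val_eq_pair hq).symm])
  · have hx₂x₃ : x₂ ≠ x₃ := fun h => not_adj_of_val_eq_pair h₂ (h ▸ hx₂v).symm
    exact ne_of_mem_of_not_mem (a := x₂) (by simp [w]) (by simp [h₂, hx₂v.ne, hx₂x₃])

theorem exists_isPendant_of_isPendant (hT : ∀ I, ((TS G 2).neighborSet I).Nonempty)
    (hdeg : ∀ I, I ≠ c → ((TS G 2).neighborSet I).encard ≤ 2)
    (hN : (TS G 2).neighborSet c ⊆ {b₁, b₂, q})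
    (hb₁ : (TS G 2).IsPendant b₁ c) (hb₂ : (TS G 2).IsPendant b₂ c) (h₁₂ : b₁ ≠ b₂)
    (hcq : (TS G 2).Adj c q) (hqq' : (TS G 2).Adj q q') (hq'c : q' ≠ c) :
    ∃ w, (TS G 2).IsPendant w q' ∧ w ≠ b₁ ∧ w ≠ b₂ := by
  have hcq' : ¬ (TS G 2).Adj c q' := fun h => by
    rcases hN h with rfl | rfl | rfl
    exacts [hb₁.not_adj_of_adj hcq hqq'.symm, hb₂.not_adj_of_adj hcq hqq'.symm,
      (TS G 2).irrefl hqq']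
  obtain ⟨u, v, x₁, hc, hq, -⟩ := exists_eq_pair_of_adj hcq
  obtain ⟨x₂, h₁ | h₁⟩ := exists_val_eq_pair_of_adj hb₁.adj.symm hc
  · obtain ⟨x₃, h₂⟩ := exists_val_eq_pair_of_isPendant hT hb₁ hb₂ h₁₂ hc h₁
    exact exists_isPendant_of_val_eq_pair hT hdeg hb₁ hb₂ hc hq h₁ h₂ hcq hqq' hq'c hcq'
  · have hc' : c.1 = {v, u} := by rw [hc, Finset.pair_comm]
    obtain ⟨x₃, h₂⟩ := exists_val_eq_pair_of_isPendant hT hb₁ hb₂ h₁₂ hc' h₁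
    obtain ⟨w, hw, hw₂, hw₁⟩ :=
      exists_isPendant_of_val_eq_pair hT hdeg hb₂ hb₁ hc hq h₂ h₁ hcq hqq' hq'c hcq'
    exact ⟨w, hw, hw₁, hw₂⟩

end

end TS

namespace D

variable {r s m : ℕ}

lemma isPendant_inl (a : Fin r) : (D r (m + 1) s).IsPendant (.inl a) (.inr (.inl 0)) := by
  ext x
  rcases x with a' | i | b <;> simp [D]

lemma isPendant_inr_inr (b : Fin s) :
    (D r (m + 1) s).IsPendant (.inr (.inr b)) (.inr (.inl (Fin.last m))) := by
  ext x
  rcases x with a | i | b' <;> simp [D]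
  simp [Fin.ext_iff]

lemma neighborSet_nonempty (x : Fin r ⊕ Fin (m + 1) ⊕ Fin (s + 1)) :
    ((D r (m + 1) (s + 1)).neighborSet x).Nonempty := by
  rcases x with a | i | b
  · exact ⟨_, (isPendant_inl a).adj⟩
  · by_cases hi : (i : ℕ) < m
    · exact ⟨.inr (.inl ⟨i + 1, by omega⟩), by simp [D]; simp [Fin.ext_iff]⟩
    · exact ⟨.inr (.inr 0), by simp [D]; omega⟩
  · exact ⟨_, (isPendant_inr_inr b).adj⟩

lemma encard_neighborSet_le_two (x : Fin 1 ⊕ Fin (m + 1) ⊕ Fin s)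
    (hx : x ≠ .inr (.inl (Fin.last m))) : ((D 1 (m + 1) s).neighborSet x).encard ≤ 2 := by
  rcases x with a | ⟨i, hi⟩ | b
  · rw [show (D 1 (m + 1) s).neighborSet _ = _ from isPendant_inl a, Set.encard_singleton]
    norm_num
  · have him : i < m := by
      simp [Fin.ext_iff] at hx
      omega
    refine encard_neighborSet_le_two_of_subset
      (a := if i = 0 then .inl 0 else .inr (.inl ⟨i - 1, by omega⟩))
      (b := .inr (.inl ⟨i + 1, by omega⟩)) ?_
    rintro (a | ⟨j, hj⟩ | b) h <;> simp [D] at h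
    · simp [h]
    · split_ifs <;> simp [Fin.ext_iff] <;> omega
    · omega
  · rw [show (D 1 (m + 1) s).neighborSet _ = _ from isPendant_inr_inr b, Set.encard_singleton]
    norm_num

lemma neighborSet_last_subset :
    (D r (m + 2) 2).neighborSet (.inr (.inl (Fin.last (m + 1)))) ⊆
      {.inr (.inr 0), .inr (.inr 1), .inr (.inl ⟨m, by omega⟩)} := by
  rintro (a | ⟨j, hj⟩ | b) h <;> simp [D] at h ⊢
  · obtain ⟨-, h⟩ := h
    omega
  · fin_cases b <;> simp

lemma exists_adj_ne :
    ∃ y, (D 1 (m + 2) s).Adj (.inr (.inl ⟨m, by omega⟩)) y ∧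
      y ≠ .inr (.inl (Fin.last (m + 1))) := by
  cases m with
  | zero => exact ⟨.inl 0, by simp [D]⟩
  | succ m => exact ⟨.inr (.inl ⟨m, by omega⟩), by simp [D], by simp [Fin.ext_iff]; omega⟩

lemma not_isPendant_inr_inl (i : Fin (m + 2)) (y : Fin 1 ⊕ Fin (m + 2) ⊕ Fin 2) :
    ¬ (D 1 (m + 2) 2).IsPendant (.inr (.inl i)) y := by
  obtain ⟨i, hi⟩ := i
  intro hi_pendant
  have heq : ∀ {z₁ z₂}, (D 1 (m + 2) 2).Adj (.inr (.inl ⟨i, hi⟩)) z₁ →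
      (D 1 (m + 2) 2).Adj (.inr (.inl ⟨i, hi⟩)) z₂ → z₁ = z₂ := fun h₁ h₂ =>
    (hi_pendant.eq_of_adj h₁).trans (hi_pendant.eq_of_adj h₂).symm
  by_cases h0 : i = 0
  · subst h0
    simpa using heq (z₁ := .inl 0) (z₂ := .inr (.inl 1)) (by simp [D]) (by simp [D])
  by_cases hl : i = m + 1
  · subst hl
    simpa using heq (z₁ := .inr (.inr 0)) (z₂ := .inr (.inr 1)) (by simp [D]) (by simp [D])
  have := heq (z₁ := .inr (.inl ⟨i - 1, by omega⟩)) (z₂ := .inr (.inl ⟨i + 1, by omega⟩))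
    (by simp [D]; omega) (by simp [D])
  simp [Fin.ext_iff] at this

lemma eq_one_of_isPendant {w y : Fin 1 ⊕ Fin (m + 2) ⊕ Fin 2}
    (hw : (D 1 (m + 2) 2).IsPendant w y) (hw₀ : w ≠ .inr (.inr 0)) (hw₁ : w ≠ .inr (.inr 1))
    (hy : (D 1 (m + 2) 2).Adj (.inr (.inl ⟨m, by omega⟩)) y) : m = 1 := by
  rcases w with a | i | b
  · obtain rfl : y = .inr (.inl 0) := by simpa [eq_comm] using (isPendant_inl a).symm.trans hw
    simp [D] at hy
    omega
  · exact (not_isPendant_inr_inl i y hw).elim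
  · fin_cases b <;> simp_all

end D

/-- `sixVertexGraph` below is the complement of the graph `F` with these edges. The vertices of
`TS_2(Fᶜ)` are the edges of `F`, and these six edges form `D_{1,3,2}`. -/
def sixEdges : List (Fin 6 × Fin 6) := [(0, 1), (0, 2), (0, 3), (1, 3), (3, 4), (4, 5)]

def sixVertexGraph : SimpleGraph (Fin 6) where
  Adj a b := a ≠ b ∧ (a, b) ∉ sixEdges ∧ (b, a) ∉ sixEdges
  symm := ⟨fun _ _ h => ⟨h.1.symm, h.2.2, h.2.1⟩⟩
  loopless := ⟨fun _ h => h.1 rfl⟩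

instance : DecidableRel sixVertexGraph.Adj := fun _ _ => inferInstanceAs (Decidable (_ ∧ _))

instance : DecidablePred (TSVert sixVertexGraph 2) := fun _ => inferInstanceAs (Decidable (_ ∧ _))

instance : DecidableRel (TS sixVertexGraph 2).Adj := fun _ _ => decidable_of_iff _ TS.adj_iff.symm

set_option synthInstance.maxSize 512 in
instance : DecidableRel (D 1 3 2).Adj := fun a b => decidable_of_iff _ (fromRel_adj _ a b).symm

noncomputable def isoTSSixVertexGraph : D 1 3 2 ≃g TS sixVertexGraph 2 where
  toEquiv := Equiv.ofBijective
    (Sum.elim (fun _ => ⟨{0, 1}, by decide⟩)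
      (Sum.elim ![⟨{0, 2}, by decide⟩, ⟨{0, 3}, by decide⟩, ⟨{3, 4}, by decide⟩]
        ![⟨{4, 5}, by decide⟩, ⟨{1, 3}, by decide⟩]))
    (by decide)
  map_rel_iff' {a b} := by revert a b; decide

theorem eq_three_of_iso {W : Type*} {G : SimpleGraph W} {n : ℕ} (hn : 1 ≤ n)
    (e : D 1 n 2 ≃g TS G 2) : n = 3 := by
  classical
  obtain ⟨m, rfl⟩ : ∃ m, n = m + 1 := ⟨n - 1, by omega⟩
  have hT : ∀ I, ((TS G 2).neighborSet I).Nonempty := fun I => by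
    obtain ⟨x, rfl⟩ := e.surjective I
    rw [e.neighborSet_apply]
    exact (D.neighborSet_nonempty x).image e
  have hB : ∀ b, (TS G 2).IsPendant (e (.inr (.inr b))) (e (.inr (.inl (Fin.last m)))) :=
    fun b => e.isPendant_apply_iff.2 (D.isPendant_inr_inr b)
  cases m with
  | zero =>
    exact TS.false_of_three_isPendant hT (hB 0) (hB 1)
      (e.isPendant_apply_iff.2 (D.isPendant_inl 0)) (by simp) (by simp) (by simp) |>.elim
  | succ m =>
    obtain ⟨y, hqy, hyc⟩ := D.exists_adj_ne (m := m) (s := 2)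
    have hdeg : ∀ I, I ≠ e (.inr (.inl (Fin.last (m + 1)))) →
        ((TS G 2).neighborSet I).encard ≤ 2 := fun I hI => by
      obtain ⟨x, rfl⟩ := e.surjective I
      rw [e.encard_neighborSet_apply]
      exact D.encard_neighborSet_le_two x (e.injective.ne_iff.1 hI)
    have hN : (TS G 2).neighborSet (e (.inr (.inl (Fin.last (m + 1))))) ⊆
        {e (.inr (.inr 0)), e (.inr (.inr 1)), e (.inr (.inl ⟨m, by omega⟩))} := by
      rw [e.neighborSet_apply]
      exact (Set.image_mono D.neighborSet_last_subset).trans (by simp [Set.image_insert_eq])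
    obtain ⟨w, hw, hw₀, hw₁⟩ := TS.exists_isPendant_of_isPendant hT hdeg hN (hB 0) (hB 1)
      (by simp) (e.map_adj_iff.2 (by simp [D]; simp [Fin.ext_iff])) (e.map_adj_iff.2 hqy)
      (e.injective.ne hyc)
    obtain ⟨w, rfl⟩ := e.surjective w
    have := D.eq_one_of_isPendant (e.isPendant_apply_iff.1 hw) (e.injective.ne_iff.1 hw₀)
      (e.injective.ne_iff.1 hw₁) hqy
    omega

theorem stmt17 (n : ℕ) (hn : 1 ≤ n) :
    (∃ (W : Type) (G : SimpleGraph W), Nonempty (TS G 2 ≃g D 1 n 2)) ↔ n = 3 := by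
  refine ⟨fun ⟨_, _, ⟨e⟩⟩ => eq_three_of_iso hn e.symm, ?_⟩
  rintro rfl
  exact ⟨Fin 6, sixVertexGraph, ⟨isoTSSixVertexGraph.symm⟩⟩
end
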